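/- For all k ∈ ℕ, the minimum point degree in the iterated point–line construction satisfies δ_{k+1} ≥ min { n_k − 1, 2δ_k − 3 }. -/

import Mathlib

/-!
Take `p ∈ P (k+1)`. If `p` lies on the line `l` through two points `q ≠ r` of `P k \ {p}`, write
`p = q + τ • (r - q)` and give every line not parallel to `l` its slope `a` in the frame
`(r - q, perp (r - q))`. A line of `L k` through `q` of slope `a` and one through `r` of slope `b`
(both other than `l`) meet in a point `x ∈ P (k+1)`, and `px` has slope `(1 - τ) a + τ b`. So the
slopes of the lines through `p` contain a sumset `(1 - τ) A + τ B` with `|A|, |B| ≥ δ k - 1`, and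
Cauchy–Davenport over `ℝ` gives at least `2 δ k - 3` of them. Otherwise the lines `ps` with
`s ∈ P k \ {p}` are pairwise distinct, which gives `n k - 1` lines through `p`.
-/

noncomputable section

/-- Points of the real plane. -/
abbrev Pt := ℝ × ℝ

/-- Lines are affine subspaces of the plane (we restrict to 1-dimensional ones via `IsLine`). -/
abbrev Ln := AffineSubspace ℝ Pt

/-- A line is a 1-dimensional affine subspace of `ℝ²`. -/
def IsLine (l : Ln) : Prop := Module.finrank ℝ l.direction = 1

/-- The line through two (distinct) points. -/
def lineThrough (p q : Pt) : Ln := affineSpan ℝ {p, q}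

/-- The iterated point–line construction: `P 1` is a set of four points in general position,
`L 1` is the set of lines through pairs of them; `P (k+1)` adds all intersection points of
pairs of distinct lines of `L k`, and `L (k+1)` adds all lines through pairs of distinct
points of `P (k+1)`.  No two distinct lines of any `L k` are parallel. -/
structure IterConfig where
  P : ℕ → Set Pt
  L : ℕ → Set Ln
  card_P1 : (P 1).ncard = 4
  genPos : ∀ p ∈ P 1, ∀ q ∈ P 1, ∀ r ∈ P 1,
    p ≠ q → p ≠ r → q ≠ r → ¬ Collinear ℝ ({p, q, r} : Set Pt)
  L1_def : L 1 = {l | ∃ p ∈ P 1, ∃ q ∈ P 1, p ≠ q ∧ l = lineThrough p q}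
  P_succ : ∀ k, 1 ≤ k →
    P (k + 1) = P k ∪ {x | ∃ l ∈ L k, ∃ l' ∈ L k, l ≠ l' ∧ x ∈ l ∧ x ∈ l'}
  L_succ : ∀ k, 1 ≤ k →
    L (k + 1) = L k ∪ {l | ∃ p ∈ P (k + 1), ∃ q ∈ P (k + 1), p ≠ q ∧ l = lineThrough p q}
  noParallel : ∀ k, 1 ≤ k → ∀ l ∈ L k, ∀ l' ∈ L k, l ≠ l' →
    AffineSubspace.direction l ≠ AffineSubspace.direction l'

/-- `n k`, the number of points at the beginning of stage `k`. -/
def nPts (C : IterConfig) (k : ℕ) : ℕ := (C.P k).ncard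

/-- `m k`, the number of lines at the beginning of stage `k`. -/
def nLns (C : IterConfig) (k : ℕ) : ℕ := (C.L k).ncard

/-- `d k p`, the degree of a point: the number of lines of `L k` incident to `p`. -/
def ptDeg (C : IterConfig) (k : ℕ) (p : Pt) : ℕ := {l | l ∈ C.L k ∧ p ∈ l}.ncard

/-- `δ k`, the minimum degree of a point of `P k`. -/
def minDeg (C : IterConfig) (k : ℕ) : ℕ := sInf {d | ∃ p ∈ C.P k, d = ptDeg C k p}

open Set

section Geometry

lemma left_mem_lineThrough (p q : Pt) : p ∈ lineThrough p q := left_mem_affineSpan_pair ℝ p q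

lemma right_mem_lineThrough (p q : Pt) : q ∈ lineThrough p q := right_mem_affineSpan_pair ℝ p q

lemma direction_lineThrough (p q : Pt) : (lineThrough p q).direction = ℝ ∙ (q - p) := by
  rw [lineThrough, direction_affineSpan, vectorSpan_pair_rev, vsub_eq_sub]

lemma exists_eq_add_smul_of_mem_lineThrough {p q x : Pt} (hx : x ∈ lineThrough p q) :
    ∃ t : ℝ, x = p + t • (q - p) := by
  rw [← vsub_vadd x p, lineThrough, vadd_left_mem_affineSpan_pair] at hx
  obtain ⟨t, ht⟩ := hx
  rw [vsub_eq_sub, vsub_eq_sub] at ht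
  exact ⟨t, by rw [ht]; abel⟩

lemma lineThrough_eq_lineThrough_of_mem {p q p' q' x y : Pt} (hxy : x ≠ y)
    (hx : x ∈ lineThrough p q) (hy : y ∈ lineThrough p q)
    (hx' : x ∈ lineThrough p' q') (hy' : y ∈ lineThrough p' q') :
    lineThrough p q = lineThrough p' q' :=
  (affineSpan_pair_eq_of_mem_of_mem_of_ne hx hy hxy).symm.trans
    (affineSpan_pair_eq_of_mem_of_mem_of_ne hx' hy' hxy)

lemma mem_lineThrough_of_lineThrough_eq {p s s' : Pt} (hss' : s ≠ s')
    (h : lineThrough p s = lineThrough p s') : p ∈ lineThrough s s' := by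
  have hs' : s' ∈ lineThrough p s := h ▸ right_mem_lineThrough p s'
  rw [lineThrough,
    affineSpan_pair_eq_of_mem_of_mem_of_ne (right_mem_lineThrough p s) hs' hss']
  exact left_mem_lineThrough p s

lemma finite_setOf_lineThrough {P : Set Pt} (hP : P.Finite) :
    {l | ∃ p ∈ P, ∃ q ∈ P, p ≠ q ∧ l = lineThrough p q}.Finite :=
  (hP.image2 lineThrough hP).subset <| by
    rintro _ ⟨p, hp, q, hq, -, rfl⟩
    exact mem_image2_of_mem hp hq

lemma finite_setOf_mem_inter {L : Set Ln} (hL : L.Finite)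
    (hlines : ∀ m ∈ L, ∃ x y, x ≠ y ∧ m = lineThrough x y) :
    {x | ∃ l ∈ L, ∃ l' ∈ L, l ≠ l' ∧ x ∈ l ∧ x ∈ l'}.Finite := by
  refine (hL.biUnion fun l hl => hL.biUnion fun l' hl' =>
    (?_ : {x : Pt | l ≠ l' ∧ x ∈ l ∧ x ∈ l'}.Subsingleton).finite).subset ?_
  · rintro x ⟨hne, hx, hx'⟩ y ⟨-, hy, hy'⟩
    by_contra hxy
    obtain ⟨u, w, -, rfl⟩ := hlines l hl
    obtain ⟨u', w', -, rfl⟩ := hlines l' hl'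
    exact hne (lineThrough_eq_lineThrough_of_mem hxy hx hy hx' hy')
  · rintro x ⟨l, hl, l', hl', hx⟩
    exact mem_biUnion hl (mem_biUnion hl' hx)

end Geometry

section Slope

def perp (v : Pt) : Pt := (-v.2, v.1)

lemma fst_sq_add_snd_sq_ne_zero {v : Pt} (hv : v ≠ 0) : v.1 ^ 2 + v.2 ^ 2 ≠ 0 := by
  contrapose! hv
  obtain ⟨h1, h2⟩ := (add_eq_zero_iff_of_nonneg (sq_nonneg _) (sq_nonneg _)).mp hv
  exact Prod.ext (pow_eq_zero_iff two_ne_zero |>.mp h1) (pow_eq_zero_iff two_ne_zero |>.mp h2)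

lemma eq_zero_of_smul_add_smul_perp_eq_zero {v : Pt} (hv : v ≠ 0) {a b : ℝ}
    (h : a • v + b • perp v = 0) : a = 0 ∧ b = 0 := by
  have h1 : a * v.1 + b * (-v.2) = 0 := congrArg Prod.fst h
  have h2 : a * v.2 + b * v.1 = 0 := congrArg Prod.snd h
  have hv' := fst_sq_add_snd_sq_ne_zero hv
  constructor
  · exact (mul_eq_zero.mp (by linear_combination v.1 * h1 + v.2 * h2 :
      a * (v.1 ^ 2 + v.2 ^ 2) = 0)).resolve_right hv'
  · exact (mul_eq_zero.mp (by linear_combination v.1 * h2 - v.2 * h1 :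
      b * (v.1 ^ 2 + v.2 ^ 2) = 0)).resolve_right hv'

lemma eq_of_span_smul_add_perp_eq {v : Pt} (hv : v ≠ 0) {a b : ℝ}
    (h : ℝ ∙ (a • v + perp v) = ℝ ∙ (b • v + perp v)) : a = b := by
  obtain ⟨c, hc⟩ := Submodule.mem_span_singleton.mp (h ▸ Submodule.mem_span_singleton_self _)
  obtain ⟨h1, h2⟩ := eq_zero_of_smul_add_smul_perp_eq_zero hv
    (by rw [← sub_eq_zero.mpr hc]; module : (c * b - a) • v + (c - 1) • perp v = 0)
  obtain rfl : c = 1 := by linarith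
  linarith

lemma exists_eq_smul_smul_add_perp {v w : Pt} (hv : v ≠ 0) (hw : w ∉ ℝ ∙ v) :
    ∃ β ≠ (0 : ℝ), ∃ a : ℝ, w = β • (a • v + perp v) := by
  have hN := fst_sq_add_snd_sq_ne_zero hv
  set α := (w.1 * v.1 + w.2 * v.2) / (v.1 ^ 2 + v.2 ^ 2)
  set β := (w.2 * v.1 - w.1 * v.2) / (v.1 ^ 2 + v.2 ^ 2)
  have hw' : w = α • v + β • perp v := by
    ext <;> simp only [Prod.fst_add, Prod.snd_add, Prod.smul_fst, Prod.smul_snd, perp,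
      smul_eq_mul, α, β] <;> field_simp <;> ring
  have hβ : β ≠ 0 := by
    rintro hβ
    exact hw (Submodule.mem_span_singleton.mpr ⟨α, by rw [hw', hβ, zero_smul, add_zero]⟩)
  exact ⟨β, hβ, α / β, by rw [hw', smul_add, smul_smul, mul_div_cancel₀ α hβ]⟩

open Classical in
/-- The slope of a line with respect to the frame `(v, perp v)`: the `a` for which the line has
direction `a • v + perp v` (and junk `0` for lines parallel to `v`). -/
def lineSlope (v : Pt) (m : Ln) : ℝ :=
  if h : ∃ a : ℝ, m.direction = ℝ ∙ (a • v + perp v) then h.choose else 0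

lemma lineSlope_eq {v : Pt} (hv : v ≠ 0) {m : Ln} {a : ℝ}
    (h : m.direction = ℝ ∙ (a • v + perp v)) : lineSlope v m = a := by
  have hex : ∃ b : ℝ, m.direction = ℝ ∙ (b • v + perp v) := ⟨a, h⟩
  rw [lineSlope, dif_pos hex]
  exact eq_of_span_smul_add_perp_eq hv (hex.choose_spec.symm.trans h)

lemma direction_eq_span_lineSlope {v w : Pt} (hv : v ≠ 0) {m : Ln} (hm : m.direction = ℝ ∙ w)
    (hw : w ∉ ℝ ∙ v) : m.direction = ℝ ∙ (lineSlope v m • v + perp v) := by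
  obtain ⟨β, hβ, a, rfl⟩ := exists_eq_smul_smul_add_perp hv hw
  rw [Submodule.span_singleton_smul_eq (IsUnit.mk0 β hβ)] at hm
  rw [lineSlope_eq hv hm, hm]

lemma eq_of_lineSlope_eq {v z : Pt} {m m' : Ln}
    (hm : m.direction = ℝ ∙ (lineSlope v m • v + perp v))
    (hm' : m'.direction = ℝ ∙ (lineSlope v m' • v + perp v)) (hz : z ∈ m) (hz' : z ∈ m')
    (h : lineSlope v m = lineSlope v m') : m = m' :=
  AffineSubspace.ext_of_direction_eq (by rw [hm, hm', h]) ⟨z, hz, hz'⟩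

lemma exists_mem_mem_direction_lineThrough {q v : Pt} (hv : v ≠ 0) {τ a b : ℝ} (hab : a ≠ b)
    {m m' : Ln} (hq : q ∈ m) (hr : q + v ∈ m') (hm : m.direction = ℝ ∙ (a • v + perp v))
    (hm' : m'.direction = ℝ ∙ (b • v + perp v)) :
    ∃ x ∈ m, x ∈ m' ∧ x ≠ q + τ • v ∧
      (lineThrough (q + τ • v) x).direction = ℝ ∙ (((1 - τ) * a + τ * b) • v + perp v) := by
  have hab' : a - b ≠ 0 := sub_ne_zero.mpr hab
  set x := q + (a - b)⁻¹ • (a • v + perp v)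
  have hxp : x - (q + τ • v) = (a - b)⁻¹ • (((1 - τ) * a + τ * b) • v + perp v) := by
    simp only [x]; match_scalars <;> field_simp <;> ring
  refine ⟨x, ?_, ?_, ?_, ?_⟩
  · rw [← AffineSubspace.vsub_right_mem_direction_iff_mem hq, hm, vsub_eq_sub,
      Submodule.mem_span_singleton]
    exact ⟨(a - b)⁻¹, by simp only [x]; abel⟩
  · rw [← AffineSubspace.vsub_right_mem_direction_iff_mem hr, hm', vsub_eq_sub,
      Submodule.mem_span_singleton]
    exact ⟨(a - b)⁻¹, by simp only [x]; match_scalars <;> field_simp <;> ring⟩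
  · intro h
    rw [h, sub_self, eq_comm, smul_eq_zero] at hxp
    refine hxp.elim (inv_ne_zero hab') fun h0 => one_ne_zero (α := ℝ) ?_
    exact (eq_zero_of_smul_add_smul_perp_eq_zero hv (a := (1 - τ) * a + τ * b)
      (by rwa [one_smul])).2
  · rw [direction_lineThrough, hxp,
      Submodule.span_singleton_smul_eq (IsUnit.mk0 _ (inv_ne_zero hab'))]

lemma direction_lineThrough_eq_span_lineSlope {q r x y z : Pt} (hqr : q ≠ r) (hxy : x ≠ y)
    (hz : z ∈ lineThrough q r) (hz' : z ∈ lineThrough x y)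
    (hne : lineThrough x y ≠ lineThrough q r) :
    (lineThrough x y).direction =
      ℝ ∙ (lineSlope (r - q) (lineThrough x y) • (r - q) + perp (r - q)) := by
  refine direction_eq_span_lineSlope (sub_ne_zero.mpr hqr.symm) (direction_lineThrough x y)
    fun hyx => hne (AffineSubspace.ext_of_direction_eq ?_ ⟨z, hz', hz⟩)
  obtain ⟨c, hc⟩ := Submodule.mem_span_singleton.mp hyx
  have hc0 : c ≠ 0 := by
    rintro rfl
    rw [zero_smul, eq_comm, sub_eq_zero] at hc
    exact hxy hc.symm
  rw [direction_lineThrough, direction_lineThrough, ← hc,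
    Submodule.span_singleton_smul_eq (IsUnit.mk0 c hc0)]

end Slope

section SumSet

open scoped Pointwise

variable {α : Type*}

lemma Set.ncard_add_ncard_le_ncard_add_add_one [LinearOrder α] [AddCancelCommMonoid α]
    [IsOrderedAddMonoid α] {s t : Set α} (hs : s.Finite) (ht : t.Finite) (hs₀ : s.Nonempty)
    (ht₀ : t.Nonempty) : s.ncard + t.ncard ≤ (s + t).ncard + 1 := by
  classical
  obtain ⟨s, rfl⟩ := hs.exists_finset_coe
  obtain ⟨t, rfl⟩ := ht.exists_finset_coe
  rw [← Finset.coe_add, ncard_coe_finset, ncard_coe_finset, ncard_coe_finset]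
  have := cauchy_davenport_add_of_linearOrder_isCancelAdd (Finset.coe_nonempty.mp hs₀)
    (Finset.coe_nonempty.mp ht₀)
  omega

lemma ncard_add_ncard_le_of_forall_exists_eq_add {K : Type*} [Field K] [LinearOrder K]
    [IsStrictOrderedRing K] {s t u : Set α} (hs : s.Finite) (ht : t.Finite) (hu : u.Finite)
    (hs₀ : s.Nonempty) (ht₀ : t.Nonempty) {f : α → K} (hfs : InjOn f s) (hft : InjOn f t)
    {c d : K} (hc : c ≠ 0) (hd : d ≠ 0) (h : ∀ x ∈ s, ∀ y ∈ t, ∃ z ∈ u, f z = c * f x + d * f y) :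
    s.ncard + t.ncard ≤ u.ncard + 1 := by
  have hA := ((mul_right_injective₀ hc).comp_injOn hfs).ncard_image
  have hB := ((mul_right_injective₀ hd).comp_injOn hft).ncard_image
  have hsum := Set.ncard_add_ncard_le_ncard_add_add_one (hs.image (c * f ·)) (ht.image (d * f ·))
    (hs₀.image _) (ht₀.image _)
  have hsub : (c * f ·) '' s + (d * f ·) '' t ⊆ f '' u := by
    rintro _ ⟨_, ⟨x, hx, rfl⟩, _, ⟨y, hy, rfl⟩, rfl⟩
    obtain ⟨z, hz, hfz⟩ := h x hx y hy
    exact ⟨z, hz, hfz⟩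
  have := (ncard_le_ncard hsub (hu.image f)).trans (ncard_image_le hu)
  simp only [Function.comp_def] at hA hB
  omega

end SumSet

namespace IterConfig

variable (C : IterConfig) {k : ℕ}

lemma lineThrough_mem_L (hk : 1 ≤ k) {p q : Pt} (hp : p ∈ C.P k) (hq : q ∈ C.P k)
    (hpq : p ≠ q) : lineThrough p q ∈ C.L k := by
  obtain _ | _ | j := k
  · omega
  · rw [C.L1_def]; exact ⟨p, hp, q, hq, hpq, rfl⟩
  · rw [C.L_succ (j + 1) (by omega)]; exact Or.inr ⟨p, hp, q, hq, hpq, rfl⟩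

lemma exists_eq_lineThrough (hk : 1 ≤ k) {m : Ln} (hm : m ∈ C.L k) :
    ∃ x y, x ≠ y ∧ m = lineThrough x y := by
  induction k, hk using Nat.le_induction generalizing m with
  | base =>
    rw [C.L1_def] at hm
    obtain ⟨p, -, q, -, hpq, rfl⟩ := hm
    exact ⟨p, q, hpq, rfl⟩
  | succ i hi ih =>
    rw [C.L_succ i hi] at hm
    rcases hm with hm | ⟨p, -, q, -, hpq, rfl⟩
    · exact ih hm
    · exact ⟨p, q, hpq, rfl⟩

lemma finite_P_L (hk : 1 ≤ k) : (C.P k).Finite ∧ (C.L k).Finite := by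
  induction k, hk using Nat.le_induction with
  | base =>
    have hP : (C.P 1).Finite := finite_of_ncard_ne_zero (by rw [C.card_P1]; norm_num)
    exact ⟨hP, C.L1_def ▸ finite_setOf_lineThrough hP⟩
  | succ i hi ih =>
    have hP : (C.P (i + 1)).Finite := C.P_succ i hi ▸
      ih.1.union (finite_setOf_mem_inter ih.2 fun _ hm => C.exists_eq_lineThrough hi hm)
    exact ⟨hP, C.L_succ i hi ▸ ih.2.union (finite_setOf_lineThrough hP)⟩

lemma nonempty_P (hk : 1 ≤ k) : (C.P k).Nonempty := by
  induction k, hk using Nat.le_induction with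
  | base => exact nonempty_of_ncard_ne_zero (by rw [C.card_P1]; norm_num)
  | succ i hi ih => exact C.P_succ i hi ▸ ih.mono subset_union_left

lemma finite_setOf_mem_L (hk : 1 ≤ k) (z : Pt) : {m | m ∈ C.L k ∧ z ∈ m}.Finite :=
  (C.finite_P_L hk).2.subset fun _ h => h.1

lemma minDeg_le_ptDeg {p : Pt} (hp : p ∈ C.P k) : minDeg C k ≤ ptDeg C k p :=
  Nat.sInf_le ⟨p, hp, rfl⟩

lemma exists_ptDeg_eq_minDeg (h : (C.P k).Nonempty) : ∃ p ∈ C.P k, ptDeg C k p = minDeg C k := by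
  obtain ⟨p, hp⟩ := h
  obtain ⟨q, hq, hdeg⟩ := Nat.sInf_mem (s := {d | ∃ p ∈ C.P k, d = ptDeg C k p}) ⟨_, p, hp, rfl⟩
  exact ⟨q, hq, hdeg.symm⟩

lemma direction_eq_span_lineSlope_of_mem (hk : 1 ≤ k) {q r z : Pt} (hqr : q ≠ r)
    (hz : z ∈ lineThrough q r) {m : Ln} (hm : m ∈ C.L k) (hzm : z ∈ m)
    (hml : m ≠ lineThrough q r) :
    m.direction = ℝ ∙ (lineSlope (r - q) m • (r - q) + perp (r - q)) := by
  obtain ⟨x, y, hxy, rfl⟩ := C.exists_eq_lineThrough hk hm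
  exact direction_lineThrough_eq_span_lineSlope hqr hxy hz hzm hml

lemma exists_mem_L_succ_lineSlope_eq (hk : 1 ≤ k) {q r : Pt} (hqr : q ≠ r) {τ : ℝ}
    (hp : q + τ • (r - q) ∈ C.P (k + 1)) {m m' : Ln} (hm : m ∈ C.L k) (hqm : q ∈ m)
    (hml : m ≠ lineThrough q r) (hm' : m' ∈ C.L k) (hrm' : r ∈ m')
    (hm'l : m' ≠ lineThrough q r) :
    ∃ n ∈ {n | n ∈ C.L (k + 1) ∧ q + τ • (r - q) ∈ n},
      lineSlope (r - q) n = (1 - τ) * lineSlope (r - q) m + τ * lineSlope (r - q) m' := by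
  have hdm := C.direction_eq_span_lineSlope_of_mem hk hqr (left_mem_lineThrough q r) hm hqm hml
  have hdm' :=
    C.direction_eq_span_lineSlope_of_mem hk hqr (right_mem_lineThrough q r) hm' hrm' hm'l
  have hmm' : m ≠ m' := by
    rintro rfl
    obtain ⟨x, y, -, rfl⟩ := C.exists_eq_lineThrough hk hm
    exact hml (lineThrough_eq_lineThrough_of_mem hqr hqm hrm' (left_mem_lineThrough q r)
      (right_mem_lineThrough q r))
  have hab : lineSlope (r - q) m ≠ lineSlope (r - q) m' := fun h =>
    C.noParallel k hk m hm m' hm' hmm' (by rw [hdm, hdm', h])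
  obtain ⟨x, hxm, hxm', hxp, hdx⟩ := exists_mem_mem_direction_lineThrough
    (sub_ne_zero.mpr hqr.symm) (τ := τ) hab hqm (by rwa [add_sub_cancel]) hdm hdm'
  refine ⟨lineThrough (q + τ • (r - q)) x, ⟨?_, left_mem_lineThrough _ _⟩,
    lineSlope_eq (sub_ne_zero.mpr hqr.symm) hdx⟩
  rw [C.L_succ k hk]
  refine Or.inr ⟨_, hp, x, ?_, hxp.symm, rfl⟩
  rw [C.P_succ k hk]
  exact Or.inr ⟨m, hm, m', hm', hmm', hxm, hxm'⟩

theorem ptDeg_add_ptDeg_le (hk : 1 ≤ k) {p q r : Pt} (hq : q ∈ C.P k) (hr : r ∈ C.P k)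
    (hqr : q ≠ r) (hp : p ∈ C.P (k + 1)) (hpq : p ≠ q) (hpr : p ≠ r) (hpl : p ∈ lineThrough q r)
    (hq₂ : 2 ≤ ptDeg C k q) (hr₂ : 2 ≤ ptDeg C k r) :
    ptDeg C k q + ptDeg C k r ≤ ptDeg C (k + 1) p + 3 := by
  set l := lineThrough q r
  have hl : l ∈ C.L k := C.lineThrough_mem_L hk hq hr hqr
  obtain ⟨τ, rfl⟩ := exists_eq_add_smul_of_mem_lineThrough hpl
  have hτ₀ : τ ≠ 0 := by rintro rfl; simp at hpq
  have hτ₁ : τ ≠ 1 := by rintro rfl; simp at hpr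
  set pencil := fun z => {m | m ∈ C.L k ∧ z ∈ m} \ {l}
  have hinj : ∀ z ∈ l, InjOn (lineSlope (r - q)) (pencil z) := fun z hz m hm m' hm' =>
    eq_of_lineSlope_eq (C.direction_eq_span_lineSlope_of_mem hk hqr hz hm.1.1 hm.1.2 hm.2)
      (C.direction_eq_span_lineSlope_of_mem hk hqr hz hm'.1.1 hm'.1.2 hm'.2) hm.1.2 hm'.1.2
  have hq' : (pencil q).ncard = ptDeg C k q - 1 :=
    ncard_sdiff_singleton_of_mem ⟨hl, left_mem_lineThrough q r⟩
  have hr' : (pencil r).ncard = ptDeg C k r - 1 :=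
    ncard_sdiff_singleton_of_mem ⟨hl, right_mem_lineThrough q r⟩
  have hp' : ptDeg C (k + 1) (q + τ • (r - q)) =
      {m | m ∈ C.L (k + 1) ∧ q + τ • (r - q) ∈ m}.ncard := rfl
  have := ncard_add_ncard_le_of_forall_exists_eq_add (s := pencil q) (t := pencil r)
    (C.finite_setOf_mem_L hk q).sdiff (C.finite_setOf_mem_L hk r).sdiff
    (C.finite_setOf_mem_L (k := k + 1) (by omega) (q + τ • (r - q)))
    (nonempty_of_ncard_ne_zero (by omega)) (nonempty_of_ncard_ne_zero (by omega))
    (hinj q (left_mem_lineThrough q r)) (hinj r (right_mem_lineThrough q r))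
    (sub_ne_zero.mpr hτ₁.symm) hτ₀ fun m hm m' hm' =>
      C.exists_mem_L_succ_lineSlope_eq hk hqr hp hm.1.1 hm.1.2 hm.2 hm'.1.1 hm'.1.2 hm'.2
  omega

theorem ncard_sub_one_le_ptDeg (hk : 1 ≤ k) {p : Pt} (hp : p ∈ C.P (k + 1))
    (h : ∀ q ∈ C.P k, ∀ r ∈ C.P k, q ≠ r → q ≠ p → r ≠ p → p ∉ lineThrough q r) :
    (C.P k).ncard - 1 ≤ ptDeg C (k + 1) p := by
  refine (pred_ncard_le_ncard_sdiff_singleton _ p).trans <| ncard_le_ncard_of_injOn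
    (lineThrough p) ?_ ?_ (C.finite_setOf_mem_L (k := k + 1) (by omega) p)
  · rintro s ⟨hs, hsp⟩
    refine ⟨?_, left_mem_lineThrough p s⟩
    rw [C.L_succ k hk]
    exact Or.inr ⟨p, hp, s, C.P_succ k hk ▸ Or.inl hs, Ne.symm hsp, rfl⟩
  · rintro s ⟨hs, hsp⟩ s' ⟨hs', hs'p⟩ hss'
    by_contra hne
    exact h s hs s' hs' hne hsp hs'p (mem_lineThrough_of_lineThrough_eq hne hss')

end IterConfig

/-- `δ (k+1) ≥ min (n k - 1) (2 * δ k - 3)`. -/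
theorem stmt_6 (C : IterConfig) (k : ℕ) (hk : 1 ≤ k) :
    min ((nPts C k : ℤ) - 1) (2 * (minDeg C k : ℤ) - 3) ≤ (minDeg C (k + 1) : ℤ) := by
  obtain ⟨p, hp, hdeg⟩ := C.exists_ptDeg_eq_minDeg (C.nonempty_P (k := k + 1) (by omega))
  rw [← hdeg]
  by_cases hcol : ∃ q ∈ C.P k, ∃ r ∈ C.P k, q ≠ r ∧ q ≠ p ∧ r ≠ p ∧ p ∈ lineThrough q r
  · obtain ⟨q, hq, r, hr, hqr, hqp, hrp, hpl⟩ := hcol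
    refine min_le_of_right_le ?_
    have hδq := C.minDeg_le_ptDeg hq
    have hδr := C.minDeg_le_ptDeg hr
    by_cases hδ : 2 ≤ minDeg C k
    · have := C.ptDeg_add_ptDeg_le hk hq hr hqr hp hqp.symm hrp.symm hpl (hδ.trans hδq)
        (hδ.trans hδr)
      omega
    · omega
  · refine min_le_of_left_le ?_
    push Not at hcol
    have := C.ncard_sub_one_le_ptDeg hk hp hcol
    unfold nPts
    omega
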